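/- Let Γ be a cancellation monoid with neutral element e and A = ⊕_{γ∈Γ} A_γ a Γ-graded ring whose degree-e part A_e is a local ring in the classical sense. Then the sum 𝔏 of all proper graded left ideals of A is a proper graded left ideal of A; likewise the sum ℜ of all proper graded right ideals of A is a proper graded right ideal of A, and the sum 𝔐 of all proper graded two-sided ideals of A is a proper graded two-sided ideal of A. -/

import Mathlib

/-! The degree-`0` component `a ↦ a₀` is additive, and a proper graded left (or right) ideal `I`
contains no `a` with `a₀` a unit of `A₀`: `a₀ ∈ I` because `I` is graded, and a unit of `A₀`
is a unit of `A`. Since the non-units of the local ring `A₀` are closed under addition, every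
element of the sum of all such ideals still has a non-unit degree-`0` component, whereas
`1₀ = 1`. Gradedness of a sum of graded ideals is formal, and the two-sided case reduces to
left ideals because a sum of two-sided ideals, taken as left ideals, is again two-sided. -/

section

variable {Γ : Type*} [AddCancelMonoid Γ] [DecidableEq Γ]
variable {A : Type*} [Ring A] (𝒜 : Γ → AddSubgroup A) [GradedRing 𝒜]

/-- A left ideal of `A` is graded if it contains all homogeneous components of each of
its elements (equivalently, it is generated by homogeneous elements). -/
def Ideal.IsGradedLeft (I : Ideal A) : Prop :=
  ∀ a ∈ I, ∀ γ : Γ, (DirectSum.decompose 𝒜 a γ : A) ∈ I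

/-- A right ideal of `A` (a submodule of `A` over `Aᵐᵒᵖ`) is graded if it contains all
homogeneous components of each of its elements. -/
def Ideal.IsGradedRight (I : Submodule Aᵐᵒᵖ A) : Prop :=
  ∀ a ∈ I, ∀ γ : Γ, (DirectSum.decompose 𝒜 a γ : A) ∈ I

def TwoSidedIdeal.IsGraded (I : TwoSidedIdeal A) : Prop :=
  ∀ a ∈ I, ∀ γ : Γ, (DirectSum.decompose 𝒜 a γ : A) ∈ I

end

theorem Submodule.isHomogeneous_sSup {ι R M σ : Type*} [DecidableEq ι] [Semiring R]
    [AddCommMonoid M] [Module R M] [SetLike σ M] [AddSubmonoidClass σ M] {ℳ : ι → σ}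
    [DirectSum.Decomposition ℳ] {S : Set (Submodule R M)} (hS : ∀ p ∈ S, p.IsHomogeneous ℳ) :
    (sSup S).IsHomogeneous ℳ := by
  intro i m hm
  rw [sSup_eq_iSup'] at hm ⊢
  refine Submodule.iSup_induction (motive := fun x => (DirectSum.decompose ℳ x i : M) ∈ _) _ hm
    (fun p x hx => mem_iSup_of_mem p (hS p p.2 i hx)) (by simp) fun x y hx hy => ?_
  simpa using add_mem hx hy

theorem Submodule.eq_top_of_isUnit_mem_op {R : Type*} [Semiring R] {p : Submodule Rᵐᵒᵖ R}
    {x : R} (hx : x ∈ p) (h : IsUnit x) : p = ⊤ := by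
  obtain ⟨u, rfl⟩ := h
  refine eq_top_iff.2 fun y _ => ?_
  simpa using p.smul_mem (MulOpposite.op (↑u⁻¹ * y)) hx

theorem Ideal.isTwoSided_sSup {R : Type*} [Ring R] {S : Set (Ideal R)}
    (hS : ∀ I ∈ S, I.IsTwoSided) : (sSup S).IsTwoSided := by
  refine ⟨fun {a} b ha => ?_⟩
  have hle : sSup (Submodule.toAddSubmonoid '' S) ≤
      (sSup S).toAddSubmonoid.comap (AddMonoidHom.mulRight b) := by
    refine sSup_le ?_
    rintro _ ⟨I, hI, rfl⟩ x (hx : x ∈ I)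
    have := hS I hI
    exact Submodule.mem_sSup_of_mem hI (Ideal.mul_mem_right b I hx)
  rw [← Submodule.toAddSubmonoid_sSup] at hle
  exact hle ha

namespace TwoSidedIdeal

variable {R : Type*} [Ring R]

theorem asIdeal_sSup (S : Set (TwoSidedIdeal R)) : (sSup S).asIdeal = sSup (asIdeal '' S) := by
  refine le_antisymm ?_ (sSup_le ?_)
  · have : (sSup (asIdeal '' S)).IsTwoSided := Ideal.isTwoSided_sSup (by
      rintro _ ⟨I, -, rfl⟩
      infer_instance)
    have hle : sSup S ≤ (sSup (asIdeal '' S)).toTwoSided := sSup_le fun I hI x hx =>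
      Ideal.mem_toTwoSided.2 <|
        Submodule.mem_sSup_of_mem (Set.mem_image_of_mem _ hI) (mem_asIdeal.2 hx)
    simpa using asIdeal.monotone hle
  · rintro _ ⟨I, hI, rfl⟩
    exact asIdeal.monotone (le_sSup hI)

theorem asIdeal_eq_top_iff {I : TwoSidedIdeal R} : I.asIdeal = ⊤ ↔ I = ⊤ :=
  ⟨fun h => eq_top_iff.2 fun _ _ => mem_asIdeal.1 (h ▸ Submodule.mem_top),
    fun h => h ▸ top_asIdeal⟩

end TwoSidedIdeal

section DegreeZero

variable {Γ A : Type*} [AddMonoid Γ] [DecidableEq Γ] [Ring A] (𝒜 : Γ → AddSubgroup A)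
  [GradedRing 𝒜] [IsLocalRing (𝒜 0)]

/-- Only an additive submonoid: when `Γ` is a group, `a_γ b_{-γ}` contributes to `(a * b)₀`,
so this is not a left ideal in general. -/
def degreeZeroNonunits : AddSubmonoid A :=
  (IsLocalRing.nonunitsAddSubmonoid (𝒜 0)).comap
    ((DFinsupp.evalAddMonoidHom 0).comp (DirectSum.decomposeAddEquiv 𝒜).toAddMonoidHom)

variable {𝒜}

theorem mem_degreeZeroNonunits {a : A} :
    a ∈ degreeZeroNonunits 𝒜 ↔ ¬IsUnit (DirectSum.decompose 𝒜 a (0 : Γ)) :=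
  Iff.rfl

theorem one_notMem_degreeZeroNonunits : (1 : A) ∉ degreeZeroNonunits 𝒜 := by
  have h : DirectSum.decompose 𝒜 (1 : A) (0 : Γ) = 1 :=
    Subtype.ext (DirectSum.decompose_of_mem_same 𝒜 SetLike.GradedOne.one_mem)
  rw [mem_degreeZeroNonunits, h, not_not]
  exact isUnit_one

theorem Submodule.toAddSubmonoid_le_degreeZeroNonunits {R : Type*} [Semiring R] [Module R A]
    {p : Submodule R A} (hp : p.IsHomogeneous 𝒜) (hunit : ∀ x ∈ p, ¬IsUnit x) :
    p.toAddSubmonoid ≤ degreeZeroNonunits 𝒜 := fun _ hx hx₀ =>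
  hunit _ (hp 0 hx) (hx₀.map (SetLike.GradeZero.subring 𝒜).subtype)

theorem Submodule.isHomogeneous_sSup_and_ne_top {R : Type*} [Semiring R] [Module R A]
    {S : Set (Submodule R A)} (hS : ∀ p ∈ S, p.IsHomogeneous 𝒜 ∧ ∀ x ∈ p, ¬IsUnit x) :
    (sSup S).IsHomogeneous 𝒜 ∧ sSup S ≠ ⊤ := by
  refine ⟨isHomogeneous_sSup fun p hp => (hS p hp).1, fun htop => ?_⟩
  have hle : (sSup S).toAddSubmonoid ≤ degreeZeroNonunits 𝒜 := by
    rw [toAddSubmonoid_sSup]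
    refine sSup_le ?_
    rintro _ ⟨p, hp, rfl⟩
    exact toAddSubmonoid_le_degreeZeroNonunits (hS p hp).1 (hS p hp).2
  exact one_notMem_degreeZeroNonunits (hle (htop ▸ mem_top))

end DegreeZero

section

variable {Γ : Type*} [AddCancelMonoid Γ] [DecidableEq Γ]
variable {A : Type*} [Ring A] (𝒜 : Γ → AddSubgroup A) [GradedRing 𝒜]

theorem Ideal.isGradedLeft_iff_isHomogeneous {I : Ideal A} :
    I.IsGradedLeft 𝒜 ↔ Submodule.IsHomogeneous I 𝒜 :=
  ⟨fun h γ _ ha => h _ ha γ, fun h _ ha γ => h γ ha⟩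

theorem Ideal.isGradedRight_iff_isHomogeneous {I : Submodule Aᵐᵒᵖ A} :
    Ideal.IsGradedRight 𝒜 I ↔ I.IsHomogeneous 𝒜 :=
  ⟨fun h γ _ ha => h _ ha γ, fun h _ ha γ => h γ ha⟩

theorem TwoSidedIdeal.isGraded_iff_asIdeal {I : TwoSidedIdeal A} :
    I.IsGraded 𝒜 ↔ I.asIdeal.IsGradedLeft 𝒜 :=
  Iff.rfl

theorem Ideal.isGradedLeft_sSup_and_ne_top [IsLocalRing (𝒜 0)] {S : Set (Ideal A)}
    (hS : ∀ I ∈ S, I.IsGradedLeft 𝒜 ∧ I ≠ ⊤) : (sSup S).IsGradedLeft 𝒜 ∧ sSup S ≠ ⊤ := by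
  simp_rw [isGradedLeft_iff_isHomogeneous 𝒜] at hS ⊢
  exact Submodule.isHomogeneous_sSup_and_ne_top fun I hI =>
    ⟨(hS I hI).1, fun _ hx hu => (hS I hI).2 (eq_top_of_isUnit_mem I hx hu)⟩

theorem Ideal.isGradedRight_sSup_and_ne_top [IsLocalRing (𝒜 0)] {S : Set (Submodule Aᵐᵒᵖ A)}
    (hS : ∀ I ∈ S, Ideal.IsGradedRight 𝒜 I ∧ I ≠ ⊤) :
    Ideal.IsGradedRight 𝒜 (sSup S) ∧ sSup S ≠ ⊤ := by
  simp_rw [isGradedRight_iff_isHomogeneous 𝒜] at hS ⊢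
  exact Submodule.isHomogeneous_sSup_and_ne_top fun I hI =>
    ⟨(hS I hI).1, fun _ hx hu => (hS I hI).2 (Submodule.eq_top_of_isUnit_mem_op hx hu)⟩

theorem TwoSidedIdeal.isGraded_sSup_and_ne_top [IsLocalRing (𝒜 0)] {S : Set (TwoSidedIdeal A)}
    (hS : ∀ I ∈ S, I.IsGraded 𝒜 ∧ I ≠ ⊤) : (sSup S).IsGraded 𝒜 ∧ sSup S ≠ ⊤ := by
  have h := Ideal.isGradedLeft_sSup_and_ne_top 𝒜 (S := asIdeal '' S) <| by
    rintro _ ⟨I, hI, rfl⟩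
    exact ⟨(isGraded_iff_asIdeal 𝒜).1 (hS I hI).1, mt asIdeal_eq_top_iff.1 (hS I hI).2⟩
  rw [← asIdeal_sSup] at h
  exact ⟨(isGraded_iff_asIdeal 𝒜).2 h.1, mt asIdeal_eq_top_iff.2 h.2⟩

theorem sSup_proper_graded_ideals_proper_graded [IsLocalRing (𝒜 0)] :
    (Ideal.IsGradedLeft 𝒜 (sSup {I : Ideal A | Ideal.IsGradedLeft 𝒜 I ∧ I ≠ ⊤}) ∧
      sSup {I : Ideal A | Ideal.IsGradedLeft 𝒜 I ∧ I ≠ ⊤} ≠ ⊤) ∧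
    (Ideal.IsGradedRight 𝒜 (sSup {I : Submodule Aᵐᵒᵖ A | Ideal.IsGradedRight 𝒜 I ∧ I ≠ ⊤}) ∧
      sSup {I : Submodule Aᵐᵒᵖ A | Ideal.IsGradedRight 𝒜 I ∧ I ≠ ⊤} ≠ ⊤) ∧
    (TwoSidedIdeal.IsGraded 𝒜 (sSup {I : TwoSidedIdeal A | TwoSidedIdeal.IsGraded 𝒜 I ∧ I ≠ ⊤}) ∧
      sSup {I : TwoSidedIdeal A | TwoSidedIdeal.IsGraded 𝒜 I ∧ I ≠ ⊤} ≠ ⊤) :=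
  ⟨Ideal.isGradedLeft_sSup_and_ne_top 𝒜 fun _ => id,
    Ideal.isGradedRight_sSup_and_ne_top 𝒜 fun _ => id,
    TwoSidedIdeal.isGraded_sSup_and_ne_top 𝒜 fun _ => id⟩

end
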